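/- Manin's cohomological Berezinian is one-dimensional: ω₀ * ω₀ = 0, and for every α ∈ B with ω₀ * α = 0 there exist c ∈ ℝ and β ∈ B with α = c • (e_1 * e_2 * ⋯ * e_n) + ω₀ * β; moreover if c • (e_1 * ⋯ * e_n) = ω₀ * β′ for some β′ ∈ B then c = 0. Hence the cohomology of multiplication by ω₀ on B is a one-dimensional real vector space spanned by the class of e_1⋯e_n (the cohomology H(⋀W*, ω∧) defining Ber(V*) for the odd symplectic superspace W = V ⊕ ΠV* with V purely even of dimension n). -/

import Mathlib

/-!
Let `s := ∑ⱼ ∂/∂yⱼ ⊗ ιⱼ`, where `ιⱼ` contracts with the `j`-th coordinate functional. The Koszul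
identity `ω₀ s + s ω₀ = n + E_y - E_e` holds, with `E_y` and `E_e` the Euler operators counting the
degree in the `y` and in the `e`. Hence the monomial basis `y^a e_S` diagonalises `ω₀ s + s ω₀` with
eigenvalue `n + |a| - |S|`, which vanishes only on `e₁ ⋯ eₙ`. Since multiplication by `ω₀` commutes
with `ω₀ s + s ω₀`, the eigencomponents of a closed element are closed, and a closed component of
nonzero eigenvalue `k` is `ω₀ (k⁻¹ s x)`. Conversely, the `e₁ ⋯ eₙ`-coordinate vanishes on `ω₀ B`
because every term of `ω₀ x` has positive `y`-degree.
-/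

open TensorProduct ExteriorAlgebra MvPolynomial

set_option synthInstance.maxHeartbeats 1000000
set_option maxHeartbeats 1000000

noncomputable section

/-- The algebraic model `B = ⋀W*` for `W = V ⊕ ΠV*`, `V` purely even of dimension `n`. -/
abbrev Bmodel (n : ℕ) := MvPolynomial (Fin n) ℝ ⊗[ℝ] ExteriorAlgebra ℝ (Fin n → ℝ)

/-- The even generator `y_i` of `B`. -/
def yy (n : ℕ) (i : Fin n) : Bmodel n := X i ⊗ₜ 1

/-- The odd generator `e_i` of `B`. -/
def ee (n : ℕ) (i : Fin n) : Bmodel n := 1 ⊗ₜ ι ℝ (Pi.single i 1)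

/-- The odd symplectic form `ω₀ = ∑ y_i * e_i` of `B`. -/
def om0 (n : ℕ) : Bmodel n := ∑ i : Fin n, yy n i * ee n i

/-- The element `e_1 * e_2 * ⋯ * e_n` of `B`. -/
def eVol (n : ℕ) : Bmodel n := (List.ofFn (ee n)).prod

namespace Module.End

variable {K V : Type*} [Field K] [AddCommGroup V] [Module K V] {d s : End K V}

theorem eq_apply_inv_smul_of_mem_eigenspace {k : K} (hk : k ≠ 0) {v : V}
    (hv : v ∈ (d * s + s * d).eigenspace k) (hdv : d v = 0) : v = d (k⁻¹ • s v) := by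
  rw [mem_eigenspace_iff, LinearMap.add_apply, mul_apply, mul_apply, hdv, map_zero,
    add_zero] at hv
  rw [map_smul, hv, inv_smul_smul₀ hk]

theorem exists_eq_add_of_homotopy (hdd : d * d = 0) {W : K → Submodule K V}
    (hW : ∀ k, W k ≤ (d * s + s * d).eigenspace k) (hWtop : ⨆ k, W k = ⊤) {x : V}
    (hx : d x = 0) : ∃ x₀ ∈ W 0, ∃ y, x = x₀ + d y := by
  classical
  have hcomm : Commute (d * s + s * d) d := by
    simp only [Commute, SemiconjBy, add_mul, mul_add, mul_assoc, hdd, mul_zero, add_zero]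
    rw [← mul_assoc d d, hdd, zero_mul, zero_add]
  obtain ⟨F, hF, rfl⟩ :=
    (Submodule.mem_iSup_iff_exists_finsupp W x).mp (hWtop ▸ Submodule.mem_top)
  have hdF : ∀ k ∈ F.support, d (F k) = 0 :=
    (iSupIndep_iff_finsetSum_eq_zero_imp_eq_zero _).mp (eigenspaces_iSupIndep _) F.support
      (fun k => d (F k)) (fun k _ => mapsTo_genEigenspace_of_comm hcomm k 1 (hW k (hF k)))
      (by rw [← map_sum]; exact hx)
  refine ⟨F 0, hF 0, F.sum fun k v => k⁻¹ • s v, ?_⟩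
  rw [map_finsuppSum, ← F.sum_ite_self_eq' 0, ← Finsupp.sum_add]
  refine Finsupp.sum_congr fun k hk => ?_
  by_cases h0 : k = 0
  · simp [h0]
  · rw [if_neg h0, zero_add,
      ← eq_apply_inv_smul_of_mem_eigenspace h0 (hW k (hF k)) (hdF k hk)]

theorem exists_eq_add_of_homotopy_of_basis {ι : Type*} (b : Basis ι K V) (μ : ι → K)
    (hdd : d * d = 0) (hb : ∀ i, d (s (b i)) + s (d (b i)) = μ i • b i) {x : V}
    (hx : d x = 0) : ∃ x₀ ∈ Submodule.span K (b '' {i | μ i = 0}), ∃ y, x = x₀ + d y := by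
  refine exists_eq_add_of_homotopy (s := s) hdd
    (W := fun k => Submodule.span K (b '' {i | μ i = k})) (fun k => Submodule.span_le.mpr ?_) ?_ hx
  · rintro _ ⟨i, rfl, rfl⟩
    exact mem_eigenspace_iff.mpr (hb i)
  · refine eq_top_iff.mpr (b.span_eq ▸ Submodule.span_le.mpr ?_)
    rintro _ ⟨i, rfl⟩
    exact Submodule.mem_iSup_of_mem (μ i) (Submodule.subset_span ⟨i, rfl, rfl⟩)

end Module.End

namespace ExteriorAlgebra

theorem ι_mul_ι_anticomm {R M : Type*} [CommRing R] [AddCommGroup M] [Module R M] (v w : M) :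
    ι R v * ι R w = -(ι R w * ι R v) :=
  eq_neg_of_add_eq_zero_left (ι_add_mul_swap v w)

variable {R I : Type*} [CommRing R]

variable (R) in
def contractCoord (i : I) : ExteriorAlgebra R (I → R) →ₗ[R] ExteriorAlgebra R (I → R) :=
  CliffordAlgebra.contractLeft (Q := 0) (LinearMap.proj i)

theorem contractCoord_ι_mul (i : I) (v : I → R) (x : ExteriorAlgebra R (I → R)) :
    contractCoord R i (ι R v * x) = v i • x - ι R v * contractCoord R i x :=
  CliffordAlgebra.contractLeft_ι_mul _ _ _

variable [Fintype I] [DecidableEq I]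

theorem sum_smul_ι_single (v : I → R) : ∑ i, v i • ι R (Pi.single i 1) = ι R v := by
  simpa [Pi.basisFun_apply] using congrArg (ι R) ((Pi.basisFun R I).sum_repr v)

theorem sum_ι_mul_contractCoord_ι_mul (v : I → R) (x : ExteriorAlgebra R (I → R)) :
    ∑ i, ι R (Pi.single i 1) * contractCoord R i (ι R v * x)
      = ι R v * x + ι R v * ∑ i, ι R (Pi.single i 1) * contractCoord R i x := by
  have hterm : ∀ i, ι R (Pi.single i 1) * contractCoord R i (ι R v * x)
      = (v i • ι R (Pi.single i 1)) * x + ι R v * (ι R (Pi.single i 1) * contractCoord R i x) := by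
    intro i
    rw [contractCoord_ι_mul, mul_sub, mul_smul_comm, smul_mul_assoc, ← mul_assoc,
      ι_mul_ι_anticomm _ v, neg_mul, mul_assoc, sub_neg_eq_add]
  simp only [hterm, Finset.sum_add_distrib, ← Finset.sum_mul, ← Finset.mul_sum, sum_smul_ι_single]

theorem sum_ι_mul_contractCoord_ιMulti (k : ℕ) (v : Fin k → I → R) :
    ∑ i, ι R (Pi.single i 1) * contractCoord R i (ιMulti R k v) = k • ιMulti R k v := by
  induction k with
  | zero => simp [contractCoord, CliffordAlgebra.contractLeft_one]
  | succ k ih =>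
    rw [ιMulti_succ_apply, sum_ι_mul_contractCoord_ι_mul, ih, mul_smul_comm, succ_nsmul']

theorem sum_ι_mul_contractCoord_basis [LinearOrder I] (S : Finset I) :
    ∑ i, ι R (Pi.single i 1) * contractCoord R i ((Pi.basisFun R I).ExteriorAlgebra S)
      = S.card • (Pi.basisFun R I).ExteriorAlgebra S := by
  rw [basis_apply_ofCard _ rfl]
  exact sum_ι_mul_contractCoord_ιMulti _ _

end ExteriorAlgebra

namespace Berezinian

variable (n : ℕ)

theorem om0_mul_om0 : om0 n * om0 n = 0 := by
  have hanti : ∀ i j : Fin n, yy n i * ee n i * (yy n j * ee n j)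
      = -(yy n j * ee n j * (yy n i * ee n i)) := by
    intro i j
    simp only [yy, ee, Algebra.TensorProduct.tmul_mul_tmul, mul_one, one_mul, mul_comm (X i),
      ι_mul_ι_anticomm (Pi.single i 1 : Fin n → ℝ), TensorProduct.tmul_neg]
  have := IsAddTorsionFree.of_isTorsionFree ℝ (Bmodel n)
  refine self_eq_neg.mp ?_
  calc om0 n * om0 n = ∑ i, ∑ j, yy n i * ee n i * (yy n j * ee n j) := by
        rw [om0, Finset.sum_mul_sum]
    _ = ∑ i, ∑ j, -(yy n j * ee n j * (yy n i * ee n i)) :=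
        Finset.sum_congr rfl fun i _ => Finset.sum_congr rfl fun j _ => hanti i j
    _ = -(om0 n * om0 n) := by
        rw [om0, Finset.sum_mul_sum, Finset.sum_comm]
        simp only [Finset.sum_neg_distrib]

theorem om0_mul_tmul (f : MvPolynomial (Fin n) ℝ) (g : ExteriorAlgebra ℝ (Fin n → ℝ)) :
    om0 n * (f ⊗ₜ g) = ∑ i, (X i * f) ⊗ₜ (ι ℝ (Pi.single i 1) * g) := by
  rw [om0, Finset.sum_mul]
  refine Finset.sum_congr rfl fun i _ => ?_
  rw [yy, ee, Algebra.TensorProduct.tmul_mul_tmul, Algebra.TensorProduct.tmul_mul_tmul, mul_one,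
    one_mul]

def koszulHomotopy : Module.End ℝ (Bmodel n) :=
  ∑ j, TensorProduct.map (pderiv j).toLinearMap (contractCoord ℝ j)

theorem koszulHomotopy_tmul (f : MvPolynomial (Fin n) ℝ) (g : ExteriorAlgebra ℝ (Fin n → ℝ)) :
    koszulHomotopy n (f ⊗ₜ g) = ∑ j, pderiv j f ⊗ₜ contractCoord ℝ j g := by
  simp only [koszulHomotopy, LinearMap.sum_apply, TensorProduct.map_tmul, Derivation.coeFn_coe]

-- `∂ⱼ yᵢ = yᵢ ∂ⱼ + δᵢⱼ` and `ιⱼ eᵢ = δᵢⱼ - eᵢ ιⱼ`, so the `δ`-free parts cancel.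
theorem koszul_identity_term (i j : Fin n) (f : MvPolynomial (Fin n) ℝ)
    (g : ExteriorAlgebra ℝ (Fin n → ℝ)) :
    (X i * pderiv j f) ⊗ₜ[ℝ] (ι ℝ (Pi.single i 1) * contractCoord ℝ j g)
        + pderiv j (X i * f) ⊗ₜ[ℝ] contractCoord ℝ j (ι ℝ (Pi.single i 1) * g)
      = if i = j then f ⊗ₜ[ℝ] g + (X i * pderiv i f) ⊗ₜ[ℝ] g
          - f ⊗ₜ[ℝ] (ι ℝ (Pi.single i 1) * contractCoord ℝ i g) else 0 := by
  rw [pderiv_mul, pderiv_X, contractCoord_ι_mul]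
  by_cases hij : i = j
  · subst hij
    simp only [Pi.single_eq_same, one_smul, one_mul, if_true, add_tmul, tmul_sub]
    abel
  · simp only [Pi.single_eq_of_ne hij, Pi.single_eq_of_ne' hij, if_neg hij, zero_smul, zero_mul,
      zero_add, zero_sub, tmul_neg, add_neg_cancel]

theorem koszul_identity_tmul (f : MvPolynomial (Fin n) ℝ) (g : ExteriorAlgebra ℝ (Fin n → ℝ)) :
    om0 n * koszulHomotopy n (f ⊗ₜ g) + koszulHomotopy n (om0 n * (f ⊗ₜ g))
      = n • (f ⊗ₜ g) + (∑ i, X i * pderiv i f) ⊗ₜ g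
        - f ⊗ₜ (∑ i, ι ℝ (Pi.single i 1) * contractCoord ℝ i g) := by
  calc _ = ∑ i, ∑ j, ((X i * pderiv j f) ⊗ₜ[ℝ] (ι ℝ (Pi.single i 1) * contractCoord ℝ j g)
        + pderiv j (X i * f) ⊗ₜ[ℝ] contractCoord ℝ j (ι ℝ (Pi.single i 1) * g)) := by
        simp only [koszulHomotopy_tmul, om0_mul_tmul, Finset.mul_sum, map_sum,
          Finset.sum_add_distrib]
        rw [Finset.sum_comm]
    _ = ∑ i, (f ⊗ₜ[ℝ] g + (X i * pderiv i f) ⊗ₜ[ℝ] g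
          - f ⊗ₜ[ℝ] (ι ℝ (Pi.single i 1) * contractCoord ℝ i g)) := by
        simp only [koszul_identity_term, Finset.sum_ite_eq, Finset.mem_univ, if_true]
    _ = _ := by
        simp only [Finset.sum_add_distrib, Finset.sum_sub_distrib, sum_tmul, tmul_sum,
          Finset.sum_const, Finset.card_univ, Fintype.card_fin]

def tensorBasis : Module.Basis ((Fin n →₀ ℕ) × Finset (Fin n)) ℝ (Bmodel n) :=
  (basisMonomials (Fin n) ℝ).tensorProduct (Pi.basisFun ℝ (Fin n)).ExteriorAlgebra

theorem tensorBasis_apply (p : (Fin n →₀ ℕ) × Finset (Fin n)) :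
    tensorBasis n p = monomial p.1 1 ⊗ₜ (Pi.basisFun ℝ (Fin n)).ExteriorAlgebra p.2 := by
  rw [tensorBasis, Module.Basis.tensorProduct_apply, coe_basisMonomials]

def weight (p : (Fin n →₀ ℕ) × Finset (Fin n)) : ℝ := n + p.1.degree - p.2.card

theorem koszul_identity_tensorBasis (p : (Fin n →₀ ℕ) × Finset (Fin n)) :
    om0 n * koszulHomotopy n (tensorBasis n p) + koszulHomotopy n (om0 n * tensorBasis n p)
      = weight n p • tensorBasis n p := by
  rw [tensorBasis_apply, koszul_identity_tmul,
    (isHomogeneous_monomial (1 : ℝ) rfl).sum_X_mul_pderiv, sum_ι_mul_contractCoord_basis, weight]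
  simp only [← Nat.cast_smul_eq_nsmul ℝ, ← smul_tmul', tmul_smul]
  module

theorem weight_eq_zero_iff (p : (Fin n →₀ ℕ) × Finset (Fin n)) :
    weight n p = 0 ↔ p = (0, Finset.univ) := by
  obtain ⟨a, S⟩ := p
  have hS : S.card ≤ n := by simpa using S.card_le_univ
  simp only [weight, Prod.mk.injEq, ← Finset.card_eq_iff_eq_univ, Fintype.card_fin,
    ← Finsupp.degree_eq_zero_iff]
  constructor
  · intro h
    have hcard : ((S.card : ℕ) : ℝ) = n + a.degree := by linarith
    norm_cast at hcard
    omega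
  · rintro ⟨ha, hSn⟩
    simp [ha, hSn]

theorem eVol_eq_tensorBasis : eVol n = tensorBasis n (0, Finset.univ) := by
  rw [tensorBasis_apply, basis_apply_ofCard _ (Finset.card_fin n), ιMulti_family,
    (Set.powersetCard.ofFinEmbEquiv.symm _).strictMono.eq_id, Function.comp_id, ιMulti_apply,
    monomial_zero', C_1, ← Algebra.TensorProduct.includeRight_apply, map_list_prod, List.map_ofFn]
  simp only [Function.comp_def, Algebra.TensorProduct.includeRight_apply, Pi.basisFun_apply]
  rfl

theorem tensorBasis_coord_om0_mul (x : Bmodel n) :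
    (tensorBasis n).coord (0, Finset.univ) (om0 n * x) = 0 := by
  induction x using TensorProduct.induction_on with
  | zero => rw [mul_zero, map_zero]
  | add x y hx hy => rw [mul_add, map_add, hx, hy, add_zero]
  | tmul f g =>
    have hX : ∀ i, (basisMonomials (Fin n) ℝ).repr (X i * f) 0 = 0 := fun i => by
      change coeff 0 (X i * f) = 0
      rw [← constantCoeff_eq, map_mul, constantCoeff_X, zero_mul]
    simp only [om0_mul_tmul, map_sum, tensorBasis, Module.Basis.coord_apply,
      Module.Basis.tensorProduct_repr_tmul_apply, hX, smul_zero, Finset.sum_const_zero]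

end Berezinian

open Berezinian

theorem berezinian_one_dimensional_general (n : ℕ) :
    om0 n * om0 n = 0 ∧
      (∀ α : Bmodel n, om0 n * α = 0 →
        ∃ (c : ℝ) (β : Bmodel n), α = c • eVol n + om0 n * β) ∧
      ∀ (c : ℝ) (β' : Bmodel n), c • eVol n = om0 n * β' → c = 0 := by
  refine ⟨om0_mul_om0 n, fun α hα => ?_, fun c β h => ?_⟩
  · have hdd : LinearMap.mulLeft ℝ (om0 n) * LinearMap.mulLeft ℝ (om0 n) = 0 := by
      rw [Module.End.mul_eq_comp, ← LinearMap.mulLeft_mul, om0_mul_om0,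
        LinearMap.mulLeft_zero_eq_zero]
    obtain ⟨x₀, hx₀, β, rfl⟩ := Module.End.exists_eq_add_of_homotopy_of_basis (tensorBasis n)
      (weight n) hdd (koszul_identity_tensorBasis n) hα
    rw [show {p | weight n p = 0} = {(0, Finset.univ)} from Set.ext (weight_eq_zero_iff n),
      Set.image_singleton, ← eVol_eq_tensorBasis, Submodule.mem_span_singleton] at hx₀
    obtain ⟨c, rfl⟩ := hx₀
    exact ⟨c, β, rfl⟩
  · have hcoord := congrArg ((tensorBasis n).coord (0, Finset.univ)) h
    rwa [tensorBasis_coord_om0_mul, map_smul, eVol_eq_tensorBasis, Module.Basis.coord_apply,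
      Module.Basis.repr_self, Finsupp.single_eq_same, smul_eq_mul, mul_one] at hcoord

/-- Manin's cohomological Berezinian is one-dimensional: `ω₀ * ω₀ = 0`, every
`ω₀∧`-closed `α ∈ B` is `c • (e_1 * ⋯ * e_n) + ω₀ * β`, and `c • (e_1 * ⋯ * e_n)` is
`ω₀∧`-exact only for `c = 0`. -/
theorem berezinian_one_dimensional (n : ℕ) (hn : 1 ≤ n) :
    om0 n * om0 n = 0 ∧
      (∀ α : Bmodel n, om0 n * α = 0 →
        ∃ (c : ℝ) (β : Bmodel n), α = c • eVol n + om0 n * β) ∧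
      ∀ (c : ℝ) (β' : Bmodel n), c • eVol n = om0 n * β' → c = 0 :=
  berezinian_one_dimensional_general n
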